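/- arXiv:1912.01782 — 3 statements merged into one kernel-verified Lean document; each statement's English description precedes it below -/
import Mathlib

section
/- For every λ ∈ (0, λ_max) there exists x ∈ (0, ∞) such that λ_eff(x) = λ. (In queueing terms: for every stable semi-open queueing network with backordering there is a lost-customers modification whose adjusted arrival rate x produces the same throughput λ.) -/
/-! With `t = η₀ / x`, the denominator of `λ_eff(x)` is `D_N(t) = ∑_{n ≤ N} tⁿ C^stb(N - n)`, and
`D_N(t) = C^stb(N) + t · D_{N-1}(t)`. Hence `λ_eff(x) = η₀ D_{N-1}(t) / D_N(t)`, which tends to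
`λ_max = η₀ C^stb(N-1) / C^stb(N)` as `x → ∞` (`t → 0`), while `λ_eff(x) < x` because all
`C^stb(m)` are positive. The intermediate value theorem on `(0, ∞)`, between `x = λ` and large `x`,
gives the claim. -/

open Finset

/-- `Cstb J η ν m` is the normalisation constant `C^stb(m)` of the stability network:
the sum over tuples `(n₁,…,n_J)` with `n₁+⋯+n_J = m` of `∏_j ∏_{i=1}^{n_j} η_j/ν_j(i)`. -/
noncomputable def Cstb (J : ℕ) (η : Fin J → ℝ) (ν : Fin J → ℕ → ℝ) (m : ℕ) : ℝ :=
  ∑ n ∈ Finset.Nat.antidiagonalTuple J m,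
    ∏ j, ∏ i ∈ Finset.range (n j), η j / ν j (i + 1)

/-- The effective arrival rate of the lost-customers modification with arrival rate `x`. -/
noncomputable def lamEff (J N : ℕ) (η0 : ℝ) (η : Fin J → ℝ) (ν : Fin J → ℕ → ℝ)
    (x : ℝ) : ℝ :=
  x * (1 - Cstb J η ν N /
    ∑ n0 ∈ Finset.range (N + 1), (η0 / x) ^ n0 * Cstb J η ν (N - n0))

open Filter Topology

lemma Cstb_pos {J : ℕ} (hJ : 1 ≤ J) {η : Fin J → ℝ} (hη : ∀ j, 0 < η j)
    {ν : Fin J → ℕ → ℝ} (hν : ∀ j i, 1 ≤ i → 0 < ν j i) (m : ℕ) :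
    0 < Cstb J η ν m := by
  refine Finset.sum_pos (fun n _ ↦ prod_pos fun j _ ↦ prod_pos fun i _ ↦
    div_pos (hη j) (hν j (i + 1) i.succ_pos)) ⟨Pi.single ⟨0, hJ⟩ m, ?_⟩
  simp [Finset.Nat.mem_antidiagonalTuple]

noncomputable def revPowSum (c : ℕ → ℝ) (M : ℕ) (t : ℝ) : ℝ :=
  ∑ n ∈ range (M + 1), t ^ n * c (M - n)

section revPowSum

variable (c : ℕ → ℝ) (M : ℕ)

lemma revPowSum_zero (t : ℝ) : revPowSum c 0 t = c 0 := by
  simp [revPowSum]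

lemma revPowSum_succ (t : ℝ) : revPowSum c (M + 1) t = c (M + 1) + t * revPowSum c M t := by
  rw [revPowSum, sum_range_succ', revPowSum, mul_sum, add_comm]
  congr 1
  · simp
  · refine sum_congr rfl fun n _ ↦ ?_
    rw [Nat.add_sub_add_right, pow_succ]
    ring

lemma revPowSum_at_zero : revPowSum c M 0 = c M := by
  cases M with
  | zero => exact revPowSum_zero c 0
  | succ M => simp [revPowSum_succ]

lemma continuous_revPowSum : Continuous (revPowSum c M) := by
  unfold revPowSum
  fun_prop

lemma revPowSum_pos {c : ℕ → ℝ} (hc : ∀ m, 0 < c m) {t : ℝ} (ht : 0 ≤ t) :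
    0 < revPowSum c M t := by
  induction M with
  | zero => simpa [revPowSum_zero] using hc 0
  | succ M ih =>
    have := hc (M + 1)
    rw [revPowSum_succ]
    positivity

lemma tendsto_revPowSum_div_atTop (a : ℝ) :
    Tendsto (fun x ↦ revPowSum c M (a / x)) atTop (𝓝 (c M)) := by
  have h := ((continuous_revPowSum c M).tendsto 0).comp
    ((tendsto_const_nhds (x := a)).div_atTop tendsto_id)
  rwa [revPowSum_at_zero] at h

end revPowSum

section lamEff

variable {J : ℕ} {η : Fin J → ℝ} {ν : Fin J → ℕ → ℝ} (N : ℕ) {η0 : ℝ}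

lemma lamEff_eq_revPowSum (x : ℝ) :
    lamEff J N η0 η ν x = x * (1 - Cstb J η ν N / revPowSum (Cstb J η ν) N (η0 / x)) :=
  rfl

variable (hC : ∀ m, 0 < Cstb J η ν m) (hη0 : 0 ≤ η0)
include hC hη0

lemma lamEff_lt_self {x : ℝ} (hx : 0 < x) : lamEff J N η0 η ν x < x := by
  have := div_pos (hC N) (revPowSum_pos N hC (div_nonneg hη0 hx.le))
  rw [lamEff_eq_revPowSum]
  nlinarith

lemma continuousOn_lamEff : ContinuousOn (lamEff J N η0 η ν) (Set.Ioi 0) := by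
  have hD : ContinuousOn (fun x ↦ revPowSum (Cstb J η ν) N (η0 / x)) (Set.Ioi 0) :=
    (continuous_revPowSum _ N).comp_continuousOn
      (continuousOn_const.div continuousOn_id fun x hx ↦ ne_of_gt hx)
  exact continuousOn_id.mul (continuousOn_const.sub (continuousOn_const.div hD
    fun x hx ↦ (revPowSum_pos N hC (div_nonneg hη0 (le_of_lt hx))).ne'))

lemma lamEff_succ_eq {M : ℕ} {x : ℝ} (hx : 0 < x) :
    lamEff J (M + 1) η0 η ν x =
      η0 * revPowSum (Cstb J η ν) M (η0 / x) / revPowSum (Cstb J η ν) (M + 1) (η0 / x) := by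
  have hD := (revPowSum_pos (M + 1) hC (div_nonneg hη0 hx.le)).ne'
  rw [lamEff_eq_revPowSum, one_sub_div hD, revPowSum_succ, add_sub_cancel_left]
  field_simp

lemma tendsto_lamEff_atTop (M : ℕ) :
    Tendsto (lamEff J (M + 1) η0 η ν) atTop (𝓝 (η0 * Cstb J η ν M / Cstb J η ν (M + 1))) := by
  refine Tendsto.congr' ((eventually_gt_atTop 0).mono fun x hx ↦
    (lamEff_succ_eq hC hη0 hx).symm) ?_
  exact ((tendsto_revPowSum_div_atTop _ M η0).const_mul η0).div
    (tendsto_revPowSum_div_atTop _ (M + 1) η0) (hC (M + 1)).ne'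

end lamEff

/-- For every `λ ∈ (0, λ_max)` there exists `x ∈ (0, ∞)` with `λ_eff(x) = λ`. -/
theorem exists_adjusted_arrival_rate
    (J N : ℕ) (hJ : 1 ≤ J) (hN : 1 ≤ N)
    (η0 : ℝ) (hη0 : 0 < η0)
    (η : Fin J → ℝ) (hη : ∀ j, 0 < η j)
    (ν : Fin J → ℕ → ℝ) (hν : ∀ j i, 1 ≤ i → 0 < ν j i)
    (lam : ℝ) (hlam0 : 0 < lam)
    (hlam : lam < η0 * Cstb J η ν (N - 1) / Cstb J η ν N) :
    ∃ x : ℝ, 0 < x ∧ lamEff J N η0 η ν x = lam := by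
  obtain ⟨M, rfl⟩ := Nat.exists_eq_add_of_le' hN
  have hC := Cstb_pos hJ hη hν
  have hsurj := isPreconnected_Ioi.intermediate_value_Ico (Set.mem_Ioi.2 hlam0)
    (le_principal_iff.2 (Ioi_mem_atTop 0)) (continuousOn_lamEff _ hC hη0.le)
    (tendsto_lamEff_atTop hC hη0.le M)
  exact hsurj ⟨(lamEff_lt_self _ hC hη0.le hlam0).le, by simpa using hlam⟩
end

section
/- If every service rate is non-decreasing, i.e. ν_j(i) ≤ ν_j(i+1) for all i ≥ 1 and all j = 1,…,J, then the sequence N ↦ η₀ · C^stb(N−1)/C^stb(N) is non-decreasing on ℕ≥1; equivalently, C^stb(N−1) · C^stb(N+1) ≤ C^stb(N)² for every N ≥ 1. (The maximal stable arrival rate λ_BO,max = TH₀^stb(N) is non-decreasing in the number of resources N.) -/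
open Finset

namespace MaxRateAux

/-- zero extension of a sequence to ℤ -/
noncomputable def ext (f : ℕ → ℝ) (n : ℤ) : ℝ := if 0 ≤ n then f n.toNat else 0

/-- discrete convolution -/
noncomputable def conv (a b : ℕ → ℝ) (m : ℕ) : ℝ := ∑ k ∈ range (m + 1), a k * b (m - k)

def Pos (f : ℕ → ℝ) : Prop := ∀ n, 0 < f n

/-- ratio-monotone = log-concave -/
def RP (f : ℕ → ℝ) : Prop := ∀ u v : ℕ, u ≤ v → f u * f (v + 1) ≤ f (u + 1) * f v

lemma ext_nonneg {f : ℕ → ℝ} (hf : Pos f) (n : ℤ) : 0 ≤ ext f n := by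
  unfold ext; split
  · exact (hf _).le
  · exact le_refl 0

lemma ext_ofNat (f : ℕ → ℝ) (n : ℕ) : ext f (n : ℤ) = f n := by simp [ext]

lemma ext_neg (f : ℕ → ℝ) {n : ℤ} (h : n < 0) : ext f n = 0 := by
  simp [ext, not_le.mpr h]

lemma extRP {f : ℕ → ℝ} (hp : Pos f) (hf : RP f) :
    ∀ x y : ℤ, x ≤ y → ext f (x - 1) * ext f (y + 1) ≤ ext f x * ext f y := by
  intro x y hxy
  rcases lt_or_ge (x - 1) 0 with hx | hx
  · rw [ext_neg f hx, zero_mul]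
    exact mul_nonneg (ext_nonneg hp _) (ext_nonneg hp _)
  · obtain ⟨u, rfl⟩ : ∃ u : ℕ, x = (u : ℤ) + 1 := ⟨(x - 1).toNat, by omega⟩
    obtain ⟨v, rfl⟩ : ∃ v : ℕ, y = (v : ℤ) := ⟨y.toNat, by omega⟩
    have huv : u ≤ v := by omega
    have h1 : ((u : ℤ) + 1 - 1) = (u : ℕ) := by ring
    have h2 : ((v : ℤ) + 1) = ((v + 1 : ℕ) : ℤ) := by push_cast; ring
    have h3 : ((u : ℤ) + 1) = ((u + 1 : ℕ) : ℤ) := by push_cast; ring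
    rw [h1, h2, h3, ext_ofNat, ext_ofNat, ext_ofNat, ext_ofNat]
    exact hf u v huv

lemma ext_spread {f : ℕ → ℝ} (hp : Pos f) (hf : RP f) :
    ∀ d : ℕ, ∀ x y : ℤ, x ≤ y → ext f (x - d) * ext f (y + d) ≤ ext f x * ext f y := by
  intro d
  induction d with
  | zero => intro x y _; simp
  | succ d ih =>
    intro x y hxy
    have h1 : x - (d + 1 : ℕ) = (x - d) - 1 := by push_cast; ring
    have h2 : y + (d + 1 : ℕ) = (y + d) + 1 := by push_cast; ring
    rw [h1, h2]
    calc ext f (x - d - 1) * ext f (y + d + 1) ≤ ext f (x - d) * ext f (y + d) :=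
          extRP hp hf _ _ (by omega)
      _ ≤ ext f x * ext f y := ih x y hxy

/-- 2x2 Cauchy–Binet / Lagrange-type identity. -/
lemma lagrange (K : Finset ℤ) (f1 f2 g1 g2 : ℤ → ℝ) :
    (∑ k ∈ K, f1 k * g1 k) * (∑ k ∈ K, f2 k * g2 k)
      - (∑ k ∈ K, f1 k * g2 k) * (∑ k ∈ K, f2 k * g1 k)
    = ∑ p ∈ (K ×ˢ K).filter (fun p => p.1 < p.2),
        (f1 p.1 * f2 p.2 - f1 p.2 * f2 p.1) * (g1 p.1 * g2 p.2 - g1 p.2 * g2 p.1) := by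
  set F : ℤ × ℤ → ℝ := fun p =>
    f1 p.1 * g1 p.1 * (f2 p.2 * g2 p.2) - f1 p.1 * g2 p.1 * (f2 p.2 * g1 p.2) with hF
  have hLHS : (∑ k ∈ K, f1 k * g1 k) * (∑ k ∈ K, f2 k * g2 k)
      - (∑ k ∈ K, f1 k * g2 k) * (∑ k ∈ K, f2 k * g1 k) = ∑ p ∈ K ×ˢ K, F p := by
    rw [Finset.sum_product, Finset.sum_mul_sum, Finset.sum_mul_sum, ← Finset.sum_sub_distrib]
    exact Finset.sum_congr rfl fun x _ => by rw [← Finset.sum_sub_distrib]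
  rw [hLHS]
  have hsplit : ∑ p ∈ K ×ˢ K, F p
      = ∑ p ∈ (K ×ˢ K).filter (fun p => p.1 < p.2), F p
        + (∑ p ∈ (K ×ˢ K).filter (fun p => p.2 < p.1), F p
          + ∑ p ∈ (K ×ˢ K).filter (fun p => p.1 = p.2), F p) := by
    rw [← Finset.sum_filter_add_sum_filter_not (K ×ˢ K) (fun p => p.1 < p.2)]
    congr 1
    rw [← Finset.sum_filter_add_sum_filter_not ((K ×ˢ K).filter (fun p => ¬ p.1 < p.2))
      (fun p => p.2 < p.1), Finset.filter_filter, Finset.filter_filter]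
    congr 1
    · apply Finset.sum_congr _ (fun _ _ => rfl)
      apply Finset.filter_congr
      intro p _
      constructor
      · rintro ⟨h1, h2⟩; omega
      · intro h; omega
    · apply Finset.sum_congr _ (fun _ _ => rfl)
      apply Finset.filter_congr
      intro p _
      constructor
      · rintro ⟨h1, h2⟩; omega
      · intro h; omega
  have hdiag : ∑ p ∈ (K ×ˢ K).filter (fun p => p.1 = p.2), F p = 0 := by
    apply Finset.sum_eq_zero
    intro p hp
    have : p.1 = p.2 := (Finset.mem_filter.mp hp).2
    simp [hF, this]; ring
  have hswap : ∑ p ∈ (K ×ˢ K).filter (fun p => p.2 < p.1), F p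
      = ∑ p ∈ (K ×ˢ K).filter (fun p => p.1 < p.2), F p.swap := by
    apply Finset.sum_nbij' (fun p => p.swap) (fun p => p.swap)
    · intro p hp
      simp only [Finset.mem_filter, Finset.mem_product] at hp ⊢
      exact ⟨⟨hp.1.2, hp.1.1⟩, hp.2⟩
    · intro p hp
      simp only [Finset.mem_filter, Finset.mem_product] at hp ⊢
      exact ⟨⟨hp.1.2, hp.1.1⟩, hp.2⟩
    · intro p _; simp
    · intro p _; simp
    · intro p _; simp
  rw [hsplit, hdiag, hswap, add_zero, ← Finset.sum_add_distrib]
  apply Finset.sum_congr rfl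
  intro p _
  simp only [hF, Prod.fst_swap, Prod.snd_swap]
  ring

lemma conv_ext (a b : ℕ → ℝ) (m : ℕ) (K : Finset ℤ) (hK : Finset.Icc (0 : ℤ) m ⊆ K) :
    conv a b m = ∑ k ∈ K, ext a k * ext b (m - k) := by
  rw [← Finset.sum_subset hK]
  · rw [conv]
    apply Finset.sum_nbij' (fun (k : ℕ) => (k : ℤ)) (fun (k : ℤ) => k.toNat)
    · intro k hk
      simp only [Finset.mem_range] at hk
      simp only [Finset.mem_Icc]
      omega
    · intro k hk
      simp only [Finset.mem_Icc] at hk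
      simp only [Finset.mem_range]
      omega
    · intro k _; simp
    · intro k hk
      simp only [Finset.mem_Icc] at hk
      omega
    · intro k hk
      simp only [Finset.mem_range] at hk
      have h1 : ((m : ℤ) - k) = ((m - k : ℕ) : ℤ) := by omega
      rw [ext_ofNat, h1, ext_ofNat]
  · intro k _ hk
    simp only [Finset.mem_Icc, not_and_or, not_le] at hk
    rcases hk with hk | hk
    · rw [ext_neg a hk, zero_mul]
    · rw [ext_neg b (by omega), mul_zero]

lemma conv_shift (a b : ℕ → ℝ) (v : ℕ) (x y : ℕ) (hy : y ≤ 1) (hx : x ≤ v) :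
    conv a b (x + y) = ∑ k ∈ Finset.Icc (-1 : ℤ) (v + 1), ext b (x - k) * ext a (k + y) := by
  rw [conv_ext a b (x + y) (Finset.Icc (-1 + (y : ℤ)) ((v : ℤ) + 1 + y))
    (by intro k hk; simp only [Finset.mem_Icc] at *; push_cast at *; omega)]
  rw [← Finset.map_add_right_Icc (-1 : ℤ) ((v : ℤ) + 1) (y : ℤ), Finset.sum_map]
  apply Finset.sum_congr rfl
  intro k _
  simp only [addRightEmbedding_apply]
  have h1 : ((x : ℤ) + y) - (k + y) = (x : ℤ) - k := by ring
  have h2 : ((x + y : ℕ) : ℤ) = (x : ℤ) + y := by push_cast; ring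
  rw [h2, h1, mul_comm]

lemma convPos {a b : ℕ → ℝ} (ha : Pos a) (hb : Pos b) : Pos (conv a b) := by
  intro m
  apply Finset.sum_pos
  · intro k _
    exact mul_pos (ha k) (hb (m - k))
  · exact Finset.nonempty_range_add_one

lemma convRP {a b : ℕ → ℝ} (hap : Pos a) (ha : RP a) (hbp : Pos b) (hb : RP b) :
    RP (conv a b) := by
  intro u v huv
  have e11 := conv_shift a b v u 1 le_rfl huv
  have e22 := conv_shift a b v v 0 (by norm_num) le_rfl
  have e12 := conv_shift a b v u 0 (by norm_num) huv
  have e21 := conv_shift a b v v 1 le_rfl le_rfl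
  have key := lagrange (Finset.Icc (-1 : ℤ) (v + 1))
    (fun k => ext b ((u : ℤ) - k)) (fun k => ext b ((v : ℤ) - k))
    (fun k => ext a (k + ((1 : ℕ) : ℤ))) (fun k => ext a (k + ((0 : ℕ) : ℤ)))
  have hterm : ∀ p ∈ (Finset.Icc (-1 : ℤ) (v + 1) ×ˢ Finset.Icc (-1 : ℤ) (v + 1)).filter
      (fun p => p.1 < p.2), (0 : ℝ) ≤
      (ext b ((u : ℤ) - p.1) * ext b ((v : ℤ) - p.2)
        - ext b ((u : ℤ) - p.2) * ext b ((v : ℤ) - p.1)) *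
      (ext a (p.1 + ((1 : ℕ) : ℤ)) * ext a (p.2 + ((0 : ℕ) : ℤ))
        - ext a (p.2 + ((1 : ℕ) : ℤ)) * ext a (p.1 + ((0 : ℕ) : ℤ))) := by
    intro p hp
    obtain ⟨k, l⟩ := p
    simp only [Finset.mem_filter, Finset.mem_product, Finset.mem_Icc] at hp
    have hkl : k < l := hp.2
    apply mul_nonneg
    · rw [sub_nonneg]
      rcases le_or_gt ((u : ℤ) - k) ((v : ℤ) - l) with hc | hc
      · have := ext_spread hbp hb (l - k).toNat ((u : ℤ) - k) ((v : ℤ) - l) hc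
        have h1 : (u : ℤ) - k - ((l - k).toNat : ℤ) = (u : ℤ) - l := by omega
        have h2 : (v : ℤ) - l + ((l - k).toNat : ℤ) = (v : ℤ) - k := by omega
        rw [h1, h2] at this
        linarith [this]
      · have := ext_spread hbp hb ((v : ℤ) - u).toNat ((v : ℤ) - l) ((u : ℤ) - k) hc.le
        have h1 : (v : ℤ) - l - (((v : ℤ) - u).toNat : ℤ) = (u : ℤ) - l := by omega
        have h2 : (u : ℤ) - k + (((v : ℤ) - u).toNat : ℤ) = (v : ℤ) - k := by omega
        rw [h1, h2] at this
        nlinarith [this]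
    · rw [sub_nonneg]
      have := extRP hap ha (k + 1) l (by omega)
      have h1 : (k : ℤ) + 1 - 1 = k + ((0 : ℕ) : ℤ) := by push_cast; ring
      have h2 : (l : ℤ) + 1 = l + ((1 : ℕ) : ℤ) := by push_cast; ring
      have h3 : (k : ℤ) + 1 = k + ((1 : ℕ) : ℤ) := by push_cast; ring
      have h4 : (l : ℤ) = l + ((0 : ℕ) : ℤ) := by push_cast; ring
      rw [h1, h2, h3] at this
      nth_rewrite 2 [h4] at this
      linarith [this]
  have hsum := Finset.sum_nonneg hterm
  rw [← key] at hsum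
  rw [← e11, ← e22, ← e12, ← e21] at hsum
  have hv0 : v + 0 = v := rfl
  rw [hv0] at hsum
  have hu0 : u + 0 = u := rfl
  rw [hu0] at hsum
  linarith [hsum]

end MaxRateAux

namespace MaxRateAux

lemma geomPos {e : ℝ} (he : 0 < e) {w : ℕ → ℝ} (hw : ∀ i, 1 ≤ i → 0 < w i) :
    Pos (fun n => ∏ i ∈ range n, e / w (i + 1)) := by
  intro n
  apply Finset.prod_pos
  intro i _
  exact div_pos he (hw (i + 1) (by omega))

lemma geomRP {e : ℝ} (he : 0 < e) {w : ℕ → ℝ} (hw : ∀ i, 1 ≤ i → 0 < w i)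
    (hmono : ∀ i, 1 ≤ i → w i ≤ w (i + 1)) :
    RP (fun n => ∏ i ∈ range n, e / w (i + 1)) := by
  have hwm : ∀ i i', 1 ≤ i → i ≤ i' → w i ≤ w i' := by
    intro i i' hi hii'
    induction i' , hii' using Nat.le_induction with
    | base => exact le_rfl
    | succ i' hii' ih => exact le_trans ih (hmono i' (by omega))
  intro u v huv
  simp only
  rw [Finset.prod_range_succ, Finset.prod_range_succ]
  have hPu : 0 < ∏ i ∈ range u, e / w (i + 1) := geomPos he hw u
  have hPv : 0 < ∏ i ∈ range v, e / w (i + 1) := geomPos he hw v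
  have hr : e / w (v + 1) ≤ e / w (u + 1) := by
    apply div_le_div_of_nonneg_left he.le (hw (u + 1) (by omega))
    exact hwm (u + 1) (v + 1) (by omega) (by omega)
  calc (∏ i ∈ range u, e / w (i + 1)) * ((∏ i ∈ range v, e / w (i + 1)) * (e / w (v + 1)))
      ≤ (∏ i ∈ range u, e / w (i + 1)) * ((∏ i ∈ range v, e / w (i + 1)) * (e / w (u + 1))) := by
        apply mul_le_mul_of_nonneg_left _ hPu.le
        exact mul_le_mul_of_nonneg_left hr hPv.le
    _ = (∏ i ∈ range u, e / w (i + 1)) * (e / w (u + 1)) * ∏ i ∈ range v, e / w (i + 1) := by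
        ring

lemma Cstb_succ (J : ℕ) (η : Fin (J + 1) → ℝ) (ν : Fin (J + 1) → ℕ → ℝ) (m : ℕ) :
    Cstb (J + 1) η ν m
      = conv (fun n => ∏ i ∈ range n, η 0 / ν 0 (i + 1))
          (Cstb J (fun j => η j.succ) (fun j => ν j.succ)) m := by
  have step1 : Cstb (J + 1) η ν m
      = ∑ x ∈ (range (m + 1)).sigma (fun k => Finset.Nat.antidiagonalTuple J (m - k)),
          (∏ i ∈ range x.1, η 0 / ν 0 (i + 1)) *
            ∏ j : Fin J, ∏ i ∈ Finset.range (x.2 j), η j.succ / ν j.succ (i + 1) := by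
    rw [Cstb]
    apply Finset.sum_nbij' (fun n => (⟨n 0, Fin.tail n⟩ : (_ : ℕ) × (Fin J → ℕ)))
      (fun x => Fin.cons x.1 x.2)
    · intro n hn
      rw [Finset.Nat.mem_antidiagonalTuple] at hn
      rw [Fin.sum_univ_succ] at hn
      simp only [Finset.mem_sigma, Finset.mem_range, Finset.Nat.mem_antidiagonalTuple]
      constructor
      · omega
      · simp only [Fin.tail]
        omega
    · intro x hx
      simp only [Finset.mem_sigma, Finset.mem_range, Finset.Nat.mem_antidiagonalTuple] at hx
      rw [Finset.Nat.mem_antidiagonalTuple, Fin.sum_univ_succ]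
      simp only [Fin.cons_zero, Fin.cons_succ]
      omega
    · intro n _
      exact Fin.cons_self_tail n
    · intro x _
      simp [Fin.tail_cons]
    · intro n _
      rw [Fin.prod_univ_succ]
      simp [Fin.tail]
  rw [step1, Finset.sum_sigma, conv]
  apply Finset.sum_congr rfl
  intro k _
  rw [Cstb, Finset.mul_sum]

lemma Cstb_pos_rp : ∀ J : ℕ, 1 ≤ J → ∀ (η : Fin J → ℝ), (∀ j, 0 < η j) →
    ∀ (ν : Fin J → ℕ → ℝ), (∀ j i, 1 ≤ i → 0 < ν j i) →
    (∀ j i, 1 ≤ i → ν j i ≤ ν j (i + 1)) →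
    Pos (Cstb J η ν) ∧ RP (Cstb J η ν) := by
  intro J hJ
  induction J, hJ using Nat.le_induction with
  | base =>
    intro η hη ν hν hmono
    have hfun : Cstb 1 η ν = fun m => ∏ i ∈ range m, η 0 / ν 0 (i + 1) := by
      funext m
      rw [Cstb, Finset.Nat.antidiagonalTuple_one, Finset.sum_singleton, Fin.prod_univ_one]
      simp
    rw [hfun]
    exact ⟨geomPos (hη 0) (hν 0), geomRP (hη 0) (hν 0) (hmono 0)⟩
  | succ J hJ ih =>
    intro η hη ν hν hmono
    have hfun : Cstb (J + 1) η ν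
        = conv (fun n => ∏ i ∈ range n, η 0 / ν 0 (i + 1))
            (Cstb J (fun j => η j.succ) (fun j => ν j.succ)) := by
      funext m
      exact Cstb_succ J η ν m
    obtain ⟨hp, hr⟩ := ih (fun j => η j.succ) (fun j => hη j.succ)
      (fun j => ν j.succ) (fun j => hν j.succ) (fun j => hmono j.succ)
    rw [hfun]
    exact ⟨convPos (geomPos (hη 0) (hν 0)) hp,
      convRP (geomPos (hη 0) (hν 0)) (geomRP (hη 0) (hν 0) (hmono 0)) hp hr⟩

end MaxRateAux

open MaxRateAux in

/-- If all service rates are non-decreasing, the maximal stable arrival rate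
`λ_BO,max = TH₀^stb(N) = η₀ · C^stb(N−1)/C^stb(N)` is non-decreasing in `N`;
equivalently `C^stb(N−1) · C^stb(N+1) ≤ C^stb(N)²` for every `N ≥ 1`. -/
theorem maximal_arrival_rate_monotone
    (J : ℕ) (hJ : 1 ≤ J)
    (η0 : ℝ) (hη0 : 0 < η0)
    (η : Fin J → ℝ) (hη : ∀ j, 0 < η j)
    (ν : Fin J → ℕ → ℝ) (hν : ∀ j i, 1 ≤ i → 0 < ν j i)
    (hmono : ∀ j i, 1 ≤ i → ν j i ≤ ν j (i + 1)) :
    (∀ N : ℕ, 1 ≤ N →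
      η0 * Cstb J η ν (N - 1) / Cstb J η ν N ≤
        η0 * Cstb J η ν N / Cstb J η ν (N + 1)) ∧
    (∀ N : ℕ, 1 ≤ N →
      Cstb J η ν (N - 1) * Cstb J η ν (N + 1) ≤ (Cstb J η ν N) ^ 2) := by
  obtain ⟨hpos, hrp⟩ := Cstb_pos_rp J hJ η hη ν hν hmono
  have key : ∀ N : ℕ, 1 ≤ N →
      Cstb J η ν (N - 1) * Cstb J η ν (N + 1) ≤ (Cstb J η ν N) ^ 2 := by
    intro N hN
    obtain ⟨M, rfl⟩ : ∃ M, N = M + 1 := ⟨N - 1, by omega⟩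
    have h := hrp M (M + 1) (by omega)
    have hM : M + 1 - 1 = M := by omega
    rw [hM, sq]
    exact h
  refine ⟨?_, key⟩
  intro N hN
  rw [div_le_div_iff₀ (hpos N) (hpos (N + 1))]
  have := key N hN
  nlinarith [this, hη0.le, (hpos (N - 1)).le, (hpos N).le, (hpos (N + 1)).le]
end

section
/- Suppose r(1,0), …, r(J,0) ∈ [0,1] satisfy ∑_{i=1}^{J} η_i · r(i,0) = η₀ (the traffic equation at the resource-pool node 0). Then for every N ≥ 1: ∑ over (n₁,…,n_J) ∈ ℕ₀^J with n₁+⋯+n_J = N of (∏_{j=1}^{J} ∏_{i=1}^{n_j} (η_j/ν_j(i))) · (∑_{i=1}^{J} 1_{{n_i>0}} · ν_i(n_i) · r(i,0)) = η₀ · C^stb(N−1). Consequently the throughput through node 0 of the stability network satisfies TH₀^stb(N) = ∑_{i=1}^{J} TH_i^stb(N) · r(i,0) = η₀ · C^stb(N−1)/C^stb(N), which is the maximal stable arrival rate λ_BO,max of the SOQN with backordering. -/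
open Finset

/-- If the routing probabilities `r(i,0)` back to the resource pool satisfy the traffic
equation `∑_{i=1}^{J} η_i · r(i,0) = η₀`, then the departure-rate sum over all states of the
stability network equals `η₀ · C^stb(N−1)`; consequently the throughput through node `0`
satisfies `TH₀^stb(N) = ∑_i TH_i^stb(N)·r(i,0) = η₀ · C^stb(N−1)/C^stb(N)`, the maximal
stable arrival rate `λ_BO,max`. -/
theorem throughput_node_zero
    (J N : ℕ) (hJ : 1 ≤ J) (hN : 1 ≤ N)
    (η0 : ℝ) (hη0 : 0 < η0)
    (η : Fin J → ℝ) (hη : ∀ j, 0 < η j)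
    (ν : Fin J → ℕ → ℝ) (hν : ∀ j i, 1 ≤ i → 0 < ν j i)
    (r : Fin J → ℝ) (hr : ∀ i, r i ∈ Set.Icc (0 : ℝ) 1)
    (htraffic : ∑ i, η i * r i = η0) :
    (∑ n ∈ Finset.Nat.antidiagonalTuple J N,
        (∏ j, ∏ i ∈ Finset.range (n j), η j / ν j (i + 1)) *
          (∑ i, if 0 < n i then ν i (n i) * r i else 0))
      = η0 * Cstb J η ν (N - 1) ∧
    (∑ i, (η i * Cstb J η ν (N - 1) / Cstb J η ν N) * r i)
      = η0 * Cstb J η ν (N - 1) / Cstb J η ν N := by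
  set W : (Fin J → ℕ) → ℝ :=
    fun n => ∏ j, ∏ i ∈ Finset.range (n j), η j / ν j (i + 1) with hW
  -- key lemma: for each i, the filtered sum equals η i * r i * Cstb (N-1)
  have key : ∀ i : Fin J,
      (∑ n ∈ Finset.Nat.antidiagonalTuple J N,
        W n * (if 0 < n i then ν i (n i) * r i else 0))
      = η i * r i * Cstb J η ν (N - 1) := by
    intro i
    have hsplit : (∑ n ∈ Finset.Nat.antidiagonalTuple J N,
        W n * (if 0 < n i then ν i (n i) * r i else 0))
      = ∑ n ∈ (Finset.Nat.antidiagonalTuple J N).filter (fun n => 0 < n i),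
          W n * (ν i (n i) * r i) := by
      rw [Finset.sum_filter]
      congr 1; ext n
      split <;> simp
    rw [hsplit, Cstb, Finset.mul_sum]
    have hgen : ∀ (n : Fin J → ℕ) (b : ℕ),
        (∑ x, Function.update n i b x) + n i = (∑ x, n x) + b := by
      intro n b
      rw [Finset.sum_update_of_mem (Finset.mem_univ i),
        Finset.sum_eq_sum_sdiff_singleton_add (Finset.mem_univ i) n]
      ring
    refine Finset.sum_bij' (i := fun n _ => Function.update n i (n i - 1))
      (j := fun m _ => Function.update m i (m i + 1)) ?_ ?_ ?_ ?_ ?_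
    · intro n hn
      simp only [Finset.mem_filter, Finset.Nat.mem_antidiagonalTuple] at hn ⊢
      obtain ⟨hsum, hpos⟩ := hn
      have h1 := hgen n (n i - 1)
      set S := ∑ x, Function.update n i (n i - 1) x with hS
      omega
    · intro m hm
      simp only [Finset.mem_filter, Finset.Nat.mem_antidiagonalTuple] at hm ⊢
      have h1 := hgen m (m i + 1)
      set S := ∑ x, Function.update m i (m i + 1) x with hS
      constructor
      · omega
      · simp only [Function.update_self]
        omega
    · intro n hn
      simp only [Finset.mem_filter] at hn
      ext x
      rcases eq_or_ne x i with rfl | hx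
      · simp only [Function.update_self]
        omega
      · simp [Function.update_of_ne hx]
    · intro m hm
      ext x
      rcases eq_or_ne x i with rfl | hx
      · simp only [Function.update_self]
        omega
      · simp [Function.update_of_ne hx]
    · intro n hn
      simp only [Finset.mem_filter, Finset.Nat.mem_antidiagonalTuple] at hn
      obtain ⟨hsum, hpos⟩ := hn
      have hνpos : 0 < ν i (n i) := hν i (n i) hpos
      set m := Function.update n i (n i - 1) with hm
      have hmi : m i + 1 = n i := by simp [hm, Function.update_self]; omega
      have hWm : W n = (η i / ν i (n i)) * W m := by
        simp only [hW]
        have h1 : ∀ f : Fin J → ℕ, (∏ j, ∏ k ∈ Finset.range (f j), η j / ν j (k + 1))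
            = (∏ k ∈ Finset.range (f i), η i / ν i (k + 1)) *
              ∏ j ∈ Finset.univ \ {i}, ∏ k ∈ Finset.range (f j), η j / ν j (k + 1) := by
          intro f
          rw [Finset.prod_eq_prod_diff_singleton_mul (Finset.mem_univ i)]
          ring
        rw [h1 n, h1 m]
        have h2 : ∀ j ∈ Finset.univ \ {i},
            (∏ k ∈ Finset.range (n j), η j / ν j (k + 1))
              = ∏ k ∈ Finset.range (m j), η j / ν j (k + 1) := by
          intro j hj
          simp only [Finset.mem_sdiff, Finset.mem_singleton] at hj
          rw [hm, Function.update_of_ne hj.2]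
        rw [Finset.prod_congr rfl h2]
        have h3 : (∏ k ∈ Finset.range (n i), η i / ν i (k + 1))
            = (∏ k ∈ Finset.range (m i), η i / ν i (k + 1)) * (η i / ν i (n i)) := by
          rw [← hmi, Finset.prod_range_succ, hmi]
        rw [h3]; ring
      show W n * (ν i (n i) * r i) = η i * r i * W m
      rw [hWm]
      have hne : ν i (n i) ≠ 0 := hνpos.ne'
      have : η i / ν i (n i) * W m * (ν i (n i) * r i)
          = η i * r i * W m * (ν i (n i) / ν i (n i)) := by ring
      rw [this, div_self hne, mul_one]
  constructor
  · have hswap : (∑ n ∈ Finset.Nat.antidiagonalTuple J N,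
        W n * (∑ i, if 0 < n i then ν i (n i) * r i else 0))
      = ∑ i, ∑ n ∈ Finset.Nat.antidiagonalTuple J N,
          W n * (if 0 < n i then ν i (n i) * r i else 0) := by
      rw [Finset.sum_comm]
      congr 1; ext n
      rw [Finset.mul_sum]
    rw [show (∑ n ∈ Finset.Nat.antidiagonalTuple J N,
        (∏ j, ∏ i ∈ Finset.range (n j), η j / ν j (i + 1)) *
          (∑ i, if 0 < n i then ν i (n i) * r i else 0))
      = ∑ n ∈ Finset.Nat.antidiagonalTuple J N,
        W n * (∑ i, if 0 < n i then ν i (n i) * r i else 0) from rfl, hswap]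
    calc (∑ i, ∑ n ∈ Finset.Nat.antidiagonalTuple J N,
          W n * (if 0 < n i then ν i (n i) * r i else 0))
        = ∑ i, η i * r i * Cstb J η ν (N - 1) := by
          exact Finset.sum_congr rfl fun i _ => key i
      _ = (∑ i, η i * r i) * Cstb J η ν (N - 1) := by rw [Finset.sum_mul]
      _ = η0 * Cstb J η ν (N - 1) := by rw [htraffic]
  · calc (∑ i, (η i * Cstb J η ν (N - 1) / Cstb J η ν N) * r i)
        = (∑ i, η i * r i) * (Cstb J η ν (N - 1) / Cstb J η ν N) := by
          rw [Finset.sum_mul]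
          exact Finset.sum_congr rfl fun i _ => by ring
      _ = η0 * Cstb J η ν (N - 1) / Cstb J η ν N := by rw [htraffic]; ring
end
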